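/- arXiv:quant-ph/0007124 — 7 statements merged into one kernel-verified Lean document; each statement's English description precedes it below -/
import Mathlib

section
/- (Lemma 2.1) The subspace L̃ = span({γ} ∪ V⁻¹(L)) is invariant under the Grover-type operator U; more precisely, U maps L̃ onto L̃, i.e. U(L̃) = L̃. -/
open scoped ComplexInnerProductSpace BigOperators

/-- Lemma 2.1: `L̃ = span({γ} ∪ V⁻¹(L))` satisfies `U(L̃) = L̃`. -/
theorem stmt_2 {H : Type*} [NormedAddCommGroup H] [InnerProductSpace ℂ H] [CompleteSpace H]
    {ℓ : ℕ} (hℓ : 1 ≤ ℓ) (w : Fin ℓ → H) (hw : Orthonormal ℂ w)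
    (V : H ≃ₗᵢ[ℂ] H) (γ : H) (hγ : ‖γ‖ = 1)
    (Iγ IL U : H → H)
    (hIγ : ∀ x, Iγ x = x - (2 : ℂ) • ⟪γ, x⟫ • γ)
    (hIL : ∀ x, IL x = x - (2 : ℂ) • ∑ i, ⟪w i, x⟫ • w i)
    (hU : ∀ x, U x = -Iγ (V.symm (IL (V x))))
    (μγ : Fin ℓ → ℂ) (hμγ : ∀ j, μγ j = ⟪w j, V γ⟫)
    (hVγ : V γ ∉ Submodule.span ℂ (Set.range w))
    (Lt : Submodule ℂ H)
    (hLt : Lt = Submodule.span ℂ ({γ} ∪ Set.range (fun i => V.symm (w i)))) :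
    U '' (Lt : Set H) = (Lt : Set H) := by
  have hγγ : ⟪γ, γ⟫ = (1 : ℂ) := by
    rw [inner_self_eq_norm_sq_to_K, hγ]; norm_num
  have hγmem : γ ∈ Lt := by
    rw [hLt]; exact Submodule.subset_span (Or.inl rfl)
  have hwmem : ∀ i, V.symm (w i) ∈ Lt := by
    intro i; rw [hLt]; exact Submodule.subset_span (Or.inr ⟨i, rfl⟩)
  -- Iγ is an involution
  have hIγIγ : ∀ x, Iγ (Iγ x) = x := by
    intro x
    rw [hIγ, hIγ]
    have h1 : ⟪γ, x - (2 : ℂ) • ⟪γ, x⟫ • γ⟫ = -⟪γ, x⟫ := by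
      rw [inner_sub_right, inner_smul_right, inner_smul_right, hγγ]; ring
    rw [h1]
    module
  have hIγneg : ∀ x, Iγ (-x) = -Iγ x := by
    intro x
    rw [hIγ, hIγ]
    rw [inner_neg_right]
    module
  -- IL is an involution
  have key : ∀ (z : H) (j : Fin ℓ), ⟪w j, ∑ i, ⟪w i, z⟫ • w i⟫ = ⟪w j, z⟫ := by
    intro z j
    exact hw.inner_right_fintype (fun i => ⟪w i, z⟫) j
  have hILIL : ∀ z, IL (IL z) = z := by
    intro z
    rw [hIL, hIL]
    have h2 : ∀ j, ⟪w j, z - (2 : ℂ) • ∑ i, ⟪w i, z⟫ • w i⟫ = -⟪w j, z⟫ := by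
      intro j
      rw [inner_sub_right, inner_smul_right, key]
      ring
    simp only [h2, neg_smul, Finset.sum_neg_distrib]
    module
  have hILneg : ∀ z, IL (-z) = -IL z := by
    intro z
    rw [hIL, hIL]
    simp only [inner_neg_right, neg_smul, Finset.sum_neg_distrib]
    module
  -- Iγ maps Lt to Lt
  have hIγmem : ∀ x ∈ Lt, Iγ x ∈ Lt := by
    intro x hx
    rw [hIγ]
    exact Submodule.sub_mem _ hx (Submodule.smul_mem _ _ (Submodule.smul_mem _ _ hγmem))
  -- W = V.symm ∘ IL ∘ V maps Lt to Lt
  have hWeq : ∀ x, V.symm (IL (V x)) = x - (2 : ℂ) • ∑ i, ⟪w i, V x⟫ • V.symm (w i) := by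
    intro x
    rw [hIL]
    simp [map_sub, map_smul, map_sum]
  have hWmem : ∀ x ∈ Lt, V.symm (IL (V x)) ∈ Lt := by
    intro x hx
    rw [hWeq]
    exact Submodule.sub_mem _ hx (Submodule.smul_mem _ _
      (Submodule.sum_mem _ fun i _ => Submodule.smul_mem _ _ (hwmem i)))
  apply Set.eq_of_subset_of_subset
  · rintro _ ⟨x, hx, rfl⟩
    rw [hU]
    exact Submodule.neg_mem _ (hIγmem _ (hWmem _ hx))
  · intro x hx
    refine ⟨-(V.symm (IL (V (Iγ x)))), ?_, ?_⟩
    · exact Submodule.neg_mem _ (hWmem _ (hIγmem _ hx))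
    · rw [hU]
      rw [map_neg, V.apply_symm_apply, hILneg, hILIL, map_neg, V.symm_apply_apply,
        hIγneg, hIγIγ, neg_neg]
end

section
/- (Lemma 2.2) For every natural number m ≥ 0, the iterate U^m γ belongs to the subspace L̃ = span({γ} ∪ V⁻¹(L)). -/
open scoped ComplexInnerProductSpace BigOperators

/-- Lemma 2.2: for every `m ≥ 0`, `U^[m] γ ∈ L̃`. -/
theorem stmt_3 {H : Type*} [NormedAddCommGroup H] [InnerProductSpace ℂ H] [CompleteSpace H]
    {ℓ : ℕ} (hℓ : 1 ≤ ℓ) (w : Fin ℓ → H) (hw : Orthonormal ℂ w)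
    (V : H ≃ₗᵢ[ℂ] H) (γ : H) (hγ : ‖γ‖ = 1)
    (Iγ IL U : H → H)
    (hIγ : ∀ x, Iγ x = x - (2 : ℂ) • ⟪γ, x⟫ • γ)
    (hIL : ∀ x, IL x = x - (2 : ℂ) • ∑ i, ⟪w i, x⟫ • w i)
    (hU : ∀ x, U x = -Iγ (V.symm (IL (V x))))
    (μγ : Fin ℓ → ℂ) (hμγ : ∀ j, μγ j = ⟪w j, V γ⟫)
    (hVγ : V γ ∉ Submodule.span ℂ (Set.range w))
    (Lt : Submodule ℂ H)
    (hLt : Lt = Submodule.span ℂ ({γ} ∪ Set.range (fun i => V.symm (w i))))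
    (m : ℕ) :
    U^[m] γ ∈ Lt := by
  have hγmem : γ ∈ Lt := by
    rw [hLt]; exact Submodule.subset_span (Or.inl rfl)
  have hwmem : ∀ i, V.symm (w i) ∈ Lt := fun i => by
    rw [hLt]; exact Submodule.subset_span (Or.inr ⟨i, rfl⟩)
  have key : ∀ x ∈ Lt, U x ∈ Lt := by
    intro x hx
    rw [hU, hIγ, hIL]
    have h1 : V.symm (V x - (2 : ℂ) • ∑ i, ⟪w i, V x⟫ • w i)
        = x - (2 : ℂ) • ∑ i, ⟪w i, V x⟫ • V.symm (w i) := by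
      simp [map_sub, map_smul, map_sum]
    rw [h1]
    have hymem : x - (2 : ℂ) • ∑ i, ⟪w i, V x⟫ • V.symm (w i) ∈ Lt :=
      Submodule.sub_mem _ hx (Submodule.smul_mem _ _
        (Submodule.sum_mem _ fun i _ => Submodule.smul_mem _ _ (hwmem i)))
    exact Submodule.neg_mem _ (Submodule.sub_mem _ hymem
      (Submodule.smul_mem _ _ (Submodule.smul_mem _ _ hγmem)))
  induction m with
  | zero => simpa using hγmem
  | succ n ih => rw [Function.iterate_succ_apply']; exact key _ ih
end

section
/- (Part of Theorem 2.3) Assume a > 0. Then the Grover-type operator U satisfies U μ = μ − a γ. -/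
open scoped ComplexInnerProductSpace BigOperators

/-- part of Theorem 2.3: `U μ = μ - a γ`. -/
theorem stmt_7 {H : Type*} [NormedAddCommGroup H] [InnerProductSpace ℂ H] [CompleteSpace H]
    {ℓ : ℕ} (hℓ : 1 ≤ ℓ) (w : Fin ℓ → H) (hw : Orthonormal ℂ w)
    (V : H ≃ₗᵢ[ℂ] H) (γ : H) (hγ : ‖γ‖ = 1)
    (Iγ IL U : H → H)
    (hIγ : ∀ x, Iγ x = x - (2 : ℂ) • ⟪γ, x⟫ • γ)
    (hIL : ∀ x, IL x = x - (2 : ℂ) • ∑ i, ⟪w i, x⟫ • w i)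
    (hU : ∀ x, U x = -Iγ (V.symm (IL (V x))))
    (μγ : Fin ℓ → ℂ) (hμγ : ∀ j, μγ j = ⟪w j, V γ⟫)
    (a : ℝ) (ha : a = Real.sqrt (4 * ∑ j, ‖μγ j‖ ^ 2))
    (μ : H) (hμ : μ = ((2 / a : ℝ) : ℂ) • ∑ j, μγ j • V.symm (w j))
    (ha_pos : 0 < a) :
    U μ = μ - ((a : ℝ) : ℂ) • γ := by
  have hane : (a : ℂ) ≠ 0 := by exact_mod_cast ha_pos.ne'
  have ha2 : (a : ℝ) ^ 2 = 4 * ∑ j, ‖μγ j‖ ^ 2 := by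
    rw [ha]; exact Real.sq_sqrt (by positivity)
  have hVμ : V μ = ((2 / a : ℝ) : ℂ) • ∑ j, μγ j • w j := by
    rw [hμ, map_smul, map_sum]
    simp [LinearIsometryEquiv.apply_symm_apply]
  have hinner : ∀ i, ⟪w i, V μ⟫ = ((2 / a : ℝ) : ℂ) * μγ i := by
    intro i
    rw [hVμ, inner_smul_right]
    congr 1
    exact hw.inner_right_fintype μγ i
  have hILV : IL (V μ) = -(V μ) := by
    rw [hIL]
    have : ∑ i, ⟪w i, V μ⟫ • w i = V μ := by
      simp only [hinner]
      rw [hVμ, Finset.smul_sum]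
      exact Finset.sum_congr rfl fun i _ => by rw [smul_smul]
    rw [this]
    module
  have hγμ : ⟪γ, μ⟫ = (a : ℂ) / 2 := by
    have hterm : ∀ j, ⟪γ, μγ j • V.symm (w j)⟫ = (‖μγ j‖ ^ 2 : ℝ) := by
      intro j
      rw [inner_smul_right]
      have : ⟪γ, V.symm (w j)⟫ = (starRingEnd ℂ) (μγ j) := by
        rw [hμγ j, ← inner_conj_symm]
        congr 1
        calc ⟪V.symm (w j), γ⟫ = ⟪V (V.symm (w j)), V γ⟫ := (V.inner_map_map _ _).symm
        _ = ⟪w j, V γ⟫ := by rw [V.apply_symm_apply]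
      rw [this, Complex.mul_conj]
      norm_cast
      simp [Complex.normSq_eq_norm_sq]
    rw [hμ, inner_smul_right, inner_sum]
    simp only [hterm]
    have hsum : (∑ j, ((‖μγ j‖ ^ 2 : ℝ) : ℂ)) = ((a : ℂ) ^ 2) / 4 := by
      norm_cast
      push_cast
      linarith [ha2]
    rw [hsum]
    push_cast
    field_simp
    ring
  rw [hU, hILV, map_neg, V.symm_apply_apply, hIγ]
  rw [inner_neg_right, hγμ]
  module
end

section
/- (Part of Theorem 2.3) Assume a > 0. Then the Grover-type operator U satisfies U γ = (1 − a²) γ + a μ. -/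
open scoped ComplexInnerProductSpace BigOperators

/-- part of Theorem 2.3: `U γ = (1 - a²) γ + a μ`. -/
theorem stmt_8 {H : Type*} [NormedAddCommGroup H] [InnerProductSpace ℂ H] [CompleteSpace H]
    {ℓ : ℕ} (hℓ : 1 ≤ ℓ) (w : Fin ℓ → H) (hw : Orthonormal ℂ w)
    (V : H ≃ₗᵢ[ℂ] H) (γ : H) (hγ : ‖γ‖ = 1)
    (Iγ IL U : H → H)
    (hIγ : ∀ x, Iγ x = x - (2 : ℂ) • ⟪γ, x⟫ • γ)
    (hIL : ∀ x, IL x = x - (2 : ℂ) • ∑ i, ⟪w i, x⟫ • w i)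
    (hU : ∀ x, U x = -Iγ (V.symm (IL (V x))))
    (μγ : Fin ℓ → ℂ) (hμγ : ∀ j, μγ j = ⟪w j, V γ⟫)
    (a : ℝ) (ha : a = Real.sqrt (4 * ∑ j, ‖μγ j‖ ^ 2))
    (μ : H) (hμ : μ = ((2 / a : ℝ) : ℂ) • ∑ j, μγ j • V.symm (w j))
    (ha_pos : 0 < a) :
    U γ = ((1 - a ^ 2 : ℝ) : ℂ) • γ + ((a : ℝ) : ℂ) • μ := by
  set S : H := ∑ j, μγ j • V.symm (w j) with hS
  have hγγ : ⟪γ, γ⟫ = (1 : ℂ) := by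
    rw [inner_self_eq_norm_sq_to_K, hγ]; norm_num
  have hγS : ⟪γ, S⟫ = ((a ^ 2 / 4 : ℝ) : ℂ) := by
    have hsum : ⟪γ, S⟫ = ∑ j, ((‖μγ j‖ ^ 2 : ℝ) : ℂ) := by
      rw [hS, inner_sum]
      refine Finset.sum_congr rfl fun j _ => ?_
      rw [inner_smul_right]
      have h1 : ⟪γ, V.symm (w j)⟫ = ⟪V γ, w j⟫ := by
        rw [← V.inner_map_map γ (V.symm (w j)), V.apply_symm_apply]
      rw [h1, ← inner_conj_symm, ← hμγ j, Complex.mul_conj']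
      norm_num [Complex.normSq_eq_norm_sq]
    have ha2 : (a : ℝ) ^ 2 = 4 * ∑ j, ‖μγ j‖ ^ 2 := by
      rw [ha, Real.sq_sqrt]
      positivity
    rw [hsum]
    push_cast [ha2]
    ring
  have h2 : V.symm (IL (V γ)) = γ - (2 : ℂ) • S := by
    rw [hIL, map_sub, map_smul, map_sum, V.symm_apply_apply, hS]
    congr 2
    refine Finset.sum_congr rfl fun j _ => ?_
    rw [map_smul, hμγ j]
  rw [hU, h2, hIγ, inner_sub_right, inner_smul_right, hγγ, hγS, hμ]
  have hane : (a : ℂ) ≠ 0 := by exact_mod_cast ha_pos.ne'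
  rw [hS]
  match_scalars
  all_goals
    push_cast
    try field_simp
    try ring
end

section
/- (Theorem 2.3) Assume Vγ ∉ L and a > 0. Then 𝒱 = span{γ, μ} is a two-dimensional subspace of H (i.e. γ and μ are linearly independent) which is invariant under the Grover-type operator U, i.e. U(𝒱) ⊆ 𝒱. -/
open scoped ComplexInnerProductSpace BigOperators

/-- Theorem 2.3: if `V γ ∉ L` and `a > 0`, then `𝒱 = span{γ, μ}` is a
two-dimensional subspace of `H` (i.e. `γ` and `μ` are linearly independent) which is
invariant under `U`. -/
theorem stmt_9 {H : Type*} [NormedAddCommGroup H] [InnerProductSpace ℂ H] [CompleteSpace H]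
    {ℓ : ℕ} (hℓ : 1 ≤ ℓ) (w : Fin ℓ → H) (hw : Orthonormal ℂ w)
    (V : H ≃ₗᵢ[ℂ] H) (γ : H) (hγ : ‖γ‖ = 1)
    (Iγ IL U : H → H)
    (hIγ : ∀ x, Iγ x = x - (2 : ℂ) • ⟪γ, x⟫ • γ)
    (hIL : ∀ x, IL x = x - (2 : ℂ) • ∑ i, ⟪w i, x⟫ • w i)
    (hU : ∀ x, U x = -Iγ (V.symm (IL (V x))))
    (μγ : Fin ℓ → ℂ) (hμγ : ∀ j, μγ j = ⟪w j, V γ⟫)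
    (a : ℝ) (ha : a = Real.sqrt (4 * ∑ j, ‖μγ j‖ ^ 2))
    (μ : H) (hμ : μ = ((2 / a : ℝ) : ℂ) • ∑ j, μγ j • V.symm (w j))
    (hVγ : V γ ∉ Submodule.span ℂ (Set.range w))
    (ha_pos : 0 < a)
    (𝒱 : Submodule ℂ H) (h𝒱 : 𝒱 = Submodule.span ℂ {γ, μ}) :
    LinearIndependent ℂ ![γ, μ] ∧ ∀ x ∈ 𝒱, U x ∈ 𝒱 := by
  have haC : (a : ℂ) ≠ 0 := by exact_mod_cast ha_pos.ne'
  have ha2 : a ^ 2 = 4 * ∑ j, ‖μγ j‖ ^ 2 := by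
    rw [ha]; exact Real.sq_sqrt (by positivity)
  set P : H := ∑ j, μγ j • w j with hP
  set S : H := V.symm P with hS
  have hμS : μ = ((2 / a : ℝ) : ℂ) • S := by
    rw [hμ, hS, hP, map_sum]
    simp [map_smul]
  -- ⟪w i, P⟫ = μγ i
  have hwP : ∀ i, ⟪w i, P⟫ = μγ i := by
    intro i
    rw [hP, inner_sum]
    simp only [inner_smul_right, orthonormal_iff_ite.mp hw]
    simp
  have hγγ : ⟪γ, γ⟫ = (1 : ℂ) := by
    rw [inner_self_eq_norm_sq_to_K, hγ]; norm_num
  have hγS : ⟪γ, S⟫ = ((a ^ 2 / 4 : ℝ) : ℂ) := by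
    have h1 : ⟪γ, S⟫ = ⟪V γ, P⟫ := by
      rw [hS]
      rw [← V.inner_map_map γ (V.symm P), V.apply_symm_apply]
    rw [h1, hP, inner_sum]
    have : ∀ j, ⟪V γ, μγ j • w j⟫ = ((‖μγ j‖ ^ 2 : ℝ) : ℂ) := by
      intro j
      rw [inner_smul_right, ← inner_conj_symm, ← hμγ j, Complex.mul_conj]
      norm_cast
      simp [Complex.normSq_eq_norm_sq]
    simp_rw [this]
    rw [← Complex.ofReal_sum]
    norm_cast
    rw [ha2]; ring
  -- 2 • S = a • μ
  have h2S : (2 : ℂ) • S = (a : ℂ) • μ := by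
    rw [hμS, smul_smul]
    congr 1
    push_cast
    field_simp
  have hsumVγ : ∑ i, ⟪w i, V γ⟫ • w i = P := by
    rw [hP]
    exact Finset.sum_congr rfl fun i _ => by rw [hμγ i]
  -- U γ
  have hUγ : U γ = ((1 : ℂ) - (a : ℂ) ^ 2) • γ + (a : ℂ) • μ := by
    rw [hU, hIL, hsumVγ, map_sub, map_smul, V.symm_apply_apply, ← hS, hIγ]
    rw [inner_sub_right, inner_smul_right, hγγ, hγS, ← h2S]
    push_cast
    module
  -- U μ
  have hVμ : V μ = ((2 / a : ℝ) : ℂ) • P := by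
    rw [hμS, map_smul, hS, V.apply_symm_apply]
  have hsumVμ : ∑ i, ⟪w i, V μ⟫ • w i = ((2 / a : ℝ) : ℂ) • P := by
    rw [hVμ]
    simp_rw [inner_smul_right, hwP, mul_smul, ← Finset.smul_sum]
    rw [hP]
  have hUμ : U μ = μ - (a : ℂ) • γ := by
    rw [hU, hIL, hsumVμ, ← hVμ]
    have : V μ - (2:ℂ) • V μ = -(V μ) := by module
    rw [this, map_neg, V.symm_apply_apply, hIγ]
    rw [inner_neg_right, hμS, inner_smul_right, hγS]
    have ha0 : a ≠ 0 := ha_pos.ne'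
    push_cast
    match_scalars <;> (field_simp; try ring)
  -- linearity of U
  have hUlin : ∀ (s t : ℂ) (x y : H), U (s • x + t • y) = s • U x + t • U y := by
    intro s t x y
    simp only [hU, hIγ, hIL, map_add, map_smul, map_sub, inner_add_right, inner_smul_right,
      inner_sub_right, smul_add, smul_sub, add_smul, mul_smul, Finset.sum_add_distrib,
      ← Finset.smul_sum]
    module
  have hPmem : P ∈ Submodule.span ℂ (Set.range w) := by
    rw [hP]
    exact Submodule.sum_mem _ fun j _ =>
      Submodule.smul_mem _ _ (Submodule.subset_span ⟨j, rfl⟩)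
  have hμne : μ ≠ 0 := by
    intro h
    have : ⟪γ, μ⟫ = 0 := by rw [h, inner_zero_right]
    rw [hμS, inner_smul_right, hγS] at this
    have h4 : (2 / a : ℝ) * (a ^ 2 / 4) ≠ 0 := by
      have := ha_pos.ne'
      positivity
    exact h4 (by exact_mod_cast this)
  constructor
  · rw [LinearIndependent.pair_iff]
    intro s t hst
    have hs : s = 0 := by
      by_contra hs
      apply hVγ
      have h1 : s • V γ + t • V μ = 0 := by
        have := congrArg V hst
        rwa [map_add, map_smul, map_smul, map_zero] at this
      rw [hVμ] at h1
      have h2 : V γ = (-s⁻¹ * (t * ((2 / a : ℝ) : ℂ))) • P := by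
        have : s • V γ = -((t * ((2 / a : ℝ) : ℂ)) • P) := by
          rw [← smul_smul]
          linear_combination (norm := module) h1
        calc V γ = s⁻¹ • (s • V γ) := by rw [smul_smul, inv_mul_cancel₀ hs, one_smul]
        _ = (-s⁻¹ * (t * ((2 / a : ℝ) : ℂ))) • P := by rw [this]; module
      rw [h2]
      exact Submodule.smul_mem _ _ hPmem
    rw [hs, zero_smul, zero_add] at hst
    exact ⟨hs, (smul_eq_zero.mp hst).resolve_right hμne⟩
  · intro x hx
    rw [h𝒱] at hx ⊢
    obtain ⟨s, t, rfl⟩ := Submodule.mem_span_pair.mp hx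
    rw [hUlin, hUγ, hUμ]
    apply Submodule.add_mem
    · exact Submodule.smul_mem _ _ (Submodule.add_mem _
        (Submodule.smul_mem _ _ (Submodule.subset_span (by simp)))
        (Submodule.smul_mem _ _ (Submodule.subset_span (by simp))))
    · exact Submodule.smul_mem _ _ (Submodule.sub_mem _
        (Submodule.subset_span (by simp))
        (Submodule.smul_mem _ _ (Submodule.subset_span (by simp))))
end

section
/- Assume a > 0. For every c₁, c₂ ∈ ℂ, the Grover-type operator U satisfies U(c₁ γ + c₂ μ) = ((1 − a²) c₁ − a c₂) γ + (a c₁ + c₂) μ; that is, with respect to the (generally non-orthogonal) basis {γ, μ}, the action of U on span{γ, μ} is given by the 2×2 real matrix Mᵀ = [[1 − a², −a], [a, 1]]. -/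
open scoped ComplexInnerProductSpace BigOperators

/-- for all `c₁ c₂ : ℂ`,
`U (c₁ γ + c₂ μ) = ((1 - a²) c₁ - a c₂) γ + (a c₁ + c₂) μ`, i.e. with respect to the basis
`{γ, μ}` the action of `U` is given by the matrix `Mᵀ = [[1 - a², -a], [a, 1]]`. -/
theorem stmt_10 {H : Type*} [NormedAddCommGroup H] [InnerProductSpace ℂ H] [CompleteSpace H]
    {ℓ : ℕ} (hℓ : 1 ≤ ℓ) (w : Fin ℓ → H) (hw : Orthonormal ℂ w)
    (V : H ≃ₗᵢ[ℂ] H) (γ : H) (hγ : ‖γ‖ = 1)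
    (Iγ IL U : H → H)
    (hIγ : ∀ x, Iγ x = x - (2 : ℂ) • ⟪γ, x⟫ • γ)
    (hIL : ∀ x, IL x = x - (2 : ℂ) • ∑ i, ⟪w i, x⟫ • w i)
    (hU : ∀ x, U x = -Iγ (V.symm (IL (V x))))
    (μγ : Fin ℓ → ℂ) (hμγ : ∀ j, μγ j = ⟪w j, V γ⟫)
    (a : ℝ) (ha : a = Real.sqrt (4 * ∑ j, ‖μγ j‖ ^ 2))
    (μ : H) (hμ : μ = ((2 / a : ℝ) : ℂ) • ∑ j, μγ j • V.symm (w j))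
    (ha_pos : 0 < a)
    (c₁ c₂ : ℂ) :
    U (c₁ • γ + c₂ • μ) =
      (((1 - a ^ 2 : ℝ) : ℂ) * c₁ - ((a : ℝ) : ℂ) * c₂) • γ
        + (((a : ℝ) : ℂ) * c₁ + c₂) • μ := by
  have haC : ((a : ℝ) : ℂ) ≠ 0 := by exact_mod_cast ne_of_gt ha_pos
  set x : H := c₁ • γ + c₂ • μ with hx
  -- a² = 4 ∑ ‖μγ j‖²
  have ha2 : a ^ 2 = 4 * ∑ j, ‖μγ j‖ ^ 2 := by
    rw [ha]; exact Real.sq_sqrt (by positivity)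
  -- V μ
  have hVμ : V μ = ((2 / a : ℝ) : ℂ) • ∑ j, μγ j • w j := by
    rw [hμ, map_smul, map_sum]
    simp [LinearIsometryEquiv.apply_symm_apply]
  have hVx : V x = c₁ • V γ + c₂ • V μ := by
    rw [hx, map_add, map_smul, map_smul]
  -- inner products with w i
  have hinner : ∀ i, ⟪w i, V x⟫ = (c₁ + c₂ * (2 / a : ℝ)) * μγ i := by
    intro i
    rw [hVx, inner_add_right, inner_smul_right, inner_smul_right, hVμ,
      inner_smul_right, hw.inner_right_fintype, ← hμγ]
    push_cast
    ring
  -- IL (V x)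
  have hILVx : IL (V x) = V x - (((a : ℝ) : ℂ) * c₁ + 2 * c₂) • V μ := by
    rw [hIL]
    have hsum : ∑ i, ⟪w i, V x⟫ • w i
        = (c₁ + c₂ * ((2 / a : ℝ) : ℂ)) • ∑ j, μγ j • w j := by
      rw [Finset.smul_sum]
      refine Finset.sum_congr rfl fun i _ => ?_
      rw [hinner i, mul_smul]
    rw [hsum, hVμ, smul_smul, smul_smul]
    congr 2
    push_cast
    field_simp
  -- pull back through V.symm
  have hy : V.symm (IL (V x)) = c₁ • γ + (-(((a : ℝ) : ℂ) * c₁) - c₂) • μ := by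
    rw [hILVx, map_sub, map_smul, LinearIsometryEquiv.symm_apply_apply,
      LinearIsometryEquiv.symm_apply_apply, hx]
    module
  -- ⟪γ, γ⟫ = 1
  have hγγ : ⟪γ, γ⟫ = 1 := by
    rw [inner_self_eq_norm_sq_to_K, hγ]
    norm_num
  -- ⟪γ, μ⟫ = a / 2
  have hγμ : ⟪γ, μ⟫ = ((a / 2 : ℝ) : ℂ) := by
    rw [hμ, inner_smul_right, inner_sum]
    have h1 : ∀ j, ⟪γ, V.symm (w j)⟫ = (starRingEnd ℂ) (μγ j) := by
      intro j
      rw [hμγ, ← inner_conj_symm]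
      congr 1
      rw [← V.inner_map_map (V.symm (w j)) γ, LinearIsometryEquiv.apply_symm_apply]
    have h2 : ∑ j, ⟪γ, μγ j • V.symm (w j)⟫ = ((∑ j, ‖μγ j‖ ^ 2 : ℝ) : ℂ) := by
      push_cast
      refine Finset.sum_congr rfl fun j _ => ?_
      rw [inner_smul_right, h1 j, Complex.mul_conj']
    rw [h2]
    have : (∑ j, ‖μγ j‖ ^ 2 : ℝ) = a ^ 2 / 4 := by linarith
    rw [this]
    push_cast
    field_simp
    ring
  -- final computation
  rw [hU, hIγ, hy, inner_add_right, inner_smul_right, inner_smul_right, hγγ, hγμ]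
  push_cast [ha2]
  have h5 : (∑ j, ((‖μγ j‖ : ℂ)) ^ 2) = ((a : ℝ) : ℂ) ^ 2 / 4 := by
    rw [show ((a:ℝ):ℂ)^2 = (((a^2 : ℝ)):ℂ) by push_cast; ring, ha2]
    push_cast; ring
  rw [h5]
  module
end

section
/- (Equation 2.9) Assume a > 0. For every natural number m ≥ 0, U^m γ = c_m γ + d_m μ, where the real coefficients (c_m, d_m) are given by the matrix power (c_m, d_m)ᵀ = A^m (1, 0)ᵀ with A = [[1 − a², −a], [a, 1]]. -/
open scoped ComplexInnerProductSpace BigOperators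

/-- equation 2.9: for every `m ≥ 0`, `U^[m] γ = c_m γ + d_m μ` where
`(c_m, d_m)ᵀ = A^m (1, 0)ᵀ` with `A = [[1 - a², -a], [a, 1]]`. -/
theorem stmt_11 {H : Type*} [NormedAddCommGroup H] [InnerProductSpace ℂ H] [CompleteSpace H]
    {ℓ : ℕ} (hℓ : 1 ≤ ℓ) (w : Fin ℓ → H) (hw : Orthonormal ℂ w)
    (V : H ≃ₗᵢ[ℂ] H) (γ : H) (hγ : ‖γ‖ = 1)
    (Iγ IL U : H → H)
    (hIγ : ∀ x, Iγ x = x - (2 : ℂ) • ⟪γ, x⟫ • γ)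
    (hIL : ∀ x, IL x = x - (2 : ℂ) • ∑ i, ⟪w i, x⟫ • w i)
    (hU : ∀ x, U x = -Iγ (V.symm (IL (V x))))
    (μγ : Fin ℓ → ℂ) (hμγ : ∀ j, μγ j = ⟪w j, V γ⟫)
    (a : ℝ) (ha : a = Real.sqrt (4 * ∑ j, ‖μγ j‖ ^ 2))
    (μ : H) (hμ : μ = ((2 / a : ℝ) : ℂ) • ∑ j, μγ j • V.symm (w j))
    (ha_pos : 0 < a)
    (A : Matrix (Fin 2) (Fin 2) ℝ) (hA : A = !![1 - a ^ 2, -a; a, 1])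
    (m : ℕ) :
    U^[m] γ = (((A ^ m).mulVec ![1, 0] 0 : ℝ) : ℂ) • γ
        + (((A ^ m).mulVec ![1, 0] 1 : ℝ) : ℂ) • μ := by
  have hane : a ≠ 0 := ne_of_gt ha_pos
  have ha2 : a ^ 2 = 4 * ∑ j, ‖μγ j‖ ^ 2 := by
    rw [ha]; exact Real.sq_sqrt (by positivity)
  have hsum : ∑ j, μγ j • V.symm (w j) = ((a / 2 : ℝ) : ℂ) • μ := by
    rw [hμ, smul_smul]
    norm_cast
    rw [show (a / 2) * (2 / a) = 1 by field_simp]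
    simp
  have h1 : ∀ j, ⟪γ, V.symm (w j)⟫ = starRingEnd ℂ (μγ j) := by
    intro j
    rw [hμγ, ← inner_conj_symm]
    congr 1
    rw [← V.inner_map_map (V.symm (w j)) γ, V.apply_symm_apply]
  have hγμ : ⟪γ, μ⟫ = ((a / 2 : ℝ) : ℂ) := by
    have hterm : ∀ j, μγ j * ⟪γ, V.symm (w j)⟫ = ((‖μγ j‖ ^ 2 : ℝ) : ℂ) := by
      intro j
      rw [h1, Complex.mul_conj]
      norm_cast
      simp [Complex.normSq_eq_norm_sq]
    rw [hμ, inner_smul_right, inner_sum]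
    simp_rw [inner_smul_right, hterm, ← Complex.ofReal_sum]
    norm_cast
    field_simp
    nlinarith [ha2]
  have hγγ : ⟪γ, γ⟫ = (1 : ℂ) := by
    rw [inner_self_eq_norm_sq_to_K, hγ]; norm_num
  -- linearity of the pieces
  have hILlin : ∀ (c d : ℂ) (x y : H), IL (c • x + d • y) = c • IL x + d • IL y := by
    intro c d x y
    have hs : ∑ i, ⟪w i, c • x + d • y⟫ • w i
        = c • ∑ i, ⟪w i, x⟫ • w i + d • ∑ i, ⟪w i, y⟫ • w i := by
      rw [Finset.smul_sum, Finset.smul_sum, ← Finset.sum_add_distrib]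
      refine Finset.sum_congr rfl fun i _ => ?_
      rw [inner_add_right, inner_smul_right, inner_smul_right, add_smul, smul_smul, smul_smul]
    rw [hIL, hIL, hIL, hs]
    module
  have hIγlin : ∀ (c d : ℂ) (x y : H), Iγ (c • x + d • y) = c • Iγ x + d • Iγ y := by
    intro c d x y
    rw [hIγ, hIγ, hIγ, inner_add_right, inner_smul_right, inner_smul_right]
    module
  have hUlin : ∀ (c d : ℂ) (x y : H), U (c • x + d • y) = c • U x + d • U y := by
    intro c d x y
    rw [hU, map_add, map_smul, map_smul, hILlin, map_add, map_smul, map_smul, hIγlin,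
      hU, hU]
    module
  -- action on γ
  have hVsγ : V.symm (IL (V γ)) = γ - ((a : ℝ) : ℂ) • μ := by
    rw [hIL]
    simp only [map_sub, map_smul, map_sum, V.symm_apply_apply]
    simp_rw [← hμγ]
    rw [hsum, smul_smul]
    norm_cast
    push_cast
    module
  have hUγ : U γ = ((1 - a ^ 2 : ℝ) : ℂ) • γ + ((a : ℝ) : ℂ) • μ := by
    rw [hU, hVsγ, hIγ, inner_sub_right, inner_smul_right, hγγ, hγμ]
    push_cast
    module
  -- action on μ
  have hVμ : V μ = ((2 / a : ℝ) : ℂ) • ∑ j, μγ j • w j := by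
    rw [hμ, map_smul, map_sum]
    simp_rw [map_smul, V.apply_symm_apply]
  have hwi : ∀ i, ⟪w i, V μ⟫ = ((2 / a : ℝ) : ℂ) * μγ i := by
    intro i
    rw [hVμ, inner_smul_right, inner_sum]
    simp_rw [inner_smul_right, orthonormal_iff_ite.mp hw]
    simp [mul_ite]
  have hILVμ : V.symm (IL (V μ)) = -μ := by
    rw [hIL]
    simp only [map_sub, map_smul, map_sum, V.symm_apply_apply]
    have hs : ∑ i, ⟪w i, V μ⟫ • V.symm (w i) = μ := by
      simp_rw [hwi, mul_smul, ← Finset.smul_sum, hsum, smul_smul]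
      norm_cast
      rw [show (2 / a) * (a / 2) = 1 by field_simp]
      simp
    rw [hs]
    module
  have hUμ : U μ = ((-a : ℝ) : ℂ) • γ + μ := by
    rw [hU, hILVμ, hIγ, inner_neg_right, hγμ]
    push_cast
    module
  -- induction
  induction m with
  | zero => simp [Matrix.one_mulVec]
  | succ n ih =>
    have e0 : (A ^ (n + 1)).mulVec ![1, 0] 0
        = (1 - a ^ 2) * (A ^ n).mulVec ![1, 0] 0 + (-a) * (A ^ n).mulVec ![1, 0] 1 := by
      rw [pow_succ', ← Matrix.mulVec_mulVec]
      simp [hA, Matrix.mulVec, dotProduct, Fin.sum_univ_two]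
    have e1 : (A ^ (n + 1)).mulVec ![1, 0] 1
        = a * (A ^ n).mulVec ![1, 0] 0 + 1 * (A ^ n).mulVec ![1, 0] 1 := by
      rw [pow_succ', ← Matrix.mulVec_mulVec]
      simp [hA, Matrix.mulVec, dotProduct, Fin.sum_univ_two]
    rw [Function.iterate_succ_apply', ih, hUlin, hUγ, hUμ, e0, e1]
    push_cast
    module
end
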